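/- arXiv:1701.07249 — 5 statements merged into one kernel-verified Lean document; each statement's English description precedes it below -/
import Mathlib

section
/- Let R = (ρ_{pq}) be an m×m correlation matrix and let π = (π₁, π₂, π₃, π₄) denote a fixed rearrangement of four index symbols (p, q, r, s) (e.g. π = (p, r, s, q)), applied to each tuple of indices. Then Σ over all 4-tuples (p, q, r, s) of pairwise distinct indices in {1,…,m} of |ρ_{pq} · ρ_{rs} · ρ_{π₁π₂} · ρ_{π₃π₄}| ≤ 2 ‖R − I_m‖_F⁴. -/
open Finset

noncomputable section

/-- `R` is an `m × m` (Pearson) correlation matrix: symmetric positive semidefinite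
with unit diagonal. -/
def IsCorrMatrix {m : ℕ} (R : Matrix (Fin m) (Fin m) ℝ) : Prop :=
  R.PosSemidef ∧ ∀ p, R p p = 1

/-- The Frobenius norm `‖R - I_m‖_F`. -/
def frobDistId {m : ℕ} (R : Matrix (Fin m) (Fin m) ℝ) : ℝ :=
  Real.sqrt (∑ p, ∑ q, (R p q - if p = q then (1 : ℝ) else 0) ^ 2)

/-- Equivalence between quadruples and functions from `Fin 4`. -/
def e4 (α : Type*) : ((α × α) × (α × α)) ≃ (Fin 4 → α) where
  toFun x := ![x.1.1, x.1.2, x.2.1, x.2.2]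
  invFun v := ((v 0, v 1), (v 2, v 3))
  left_inv x := rfl
  right_inv v := by funext i; fin_cases i <;> rfl

/-- Precomposition with a permutation, as an equivalence. -/
def precompEquiv {α : Type*} (π : Equiv.Perm (Fin 4)) :
    (Fin 4 → α) ≃ (Fin 4 → α) where
  toFun v := v ∘ π
  invFun v := v ∘ π.symm
  left_inv v := by funext i; simp
  right_inv v := by funext i; simp

lemma abs_mul_le_half_sq (x y : ℝ) : |x * y| ≤ (x ^ 2 + y ^ 2) / 2 := by
  rw [abs_mul]
  nlinarith [sq_nonneg (|x| - |y|), sq_abs x, sq_abs y, abs_nonneg x, abs_nonneg y]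

/-- For any fixed rearrangement `π` of the four index symbols `(p, q, r, s)`,
the sum over all pairwise-distinct 4-tuples of indices of
`|ρ_{pq} ρ_{rs} ρ_{π₁π₂} ρ_{π₃π₄}|` is at most `2 ‖R − I_m‖_F⁴`. -/
theorem sum_four_corr_abs_le {m : ℕ} (R : Matrix (Fin m) (Fin m) ℝ)
    (hR : IsCorrMatrix R) (π : Equiv.Perm (Fin 4)) :
    ∑ v ∈ (Finset.univ : Finset (Fin 4 → Fin m)).filter
        (fun v => ∀ i j, v i = v j → i = j),
      |R (v 0) (v 1) * R (v 2) (v 3) * R (v (π 0)) (v (π 1)) * R (v (π 2)) (v (π 3))|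
      ≤ 2 * frobDistId R ^ 4 := by
  classical
  obtain ⟨hpsd, hdiag⟩ := hR
  set g : Fin m → Fin m → ℝ := fun p q => if p = q then 0 else (R p q) ^ 2 with hg
  have hg0 : ∀ p q, 0 ≤ g p q := by
    intro p q; simp only [g]; split
    · exact le_refl 0
    · positivity
  set F : ℝ := ∑ p, ∑ q, g p q with hFdef
  have hF0 : 0 ≤ F := Finset.sum_nonneg fun p _ => Finset.sum_nonneg fun q _ => hg0 p q
  have hfrob : frobDistId R ^ 2 = F := by
    rw [frobDistId, Real.sq_sqrt (by positivity)]
    refine Finset.sum_congr rfl fun p _ => Finset.sum_congr rfl fun q _ => ?_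
    by_cases h : p = q
    · subst h; simp [g, hdiag]
    · simp [g, h]
  set T : (Fin 4 → Fin m) → ℝ := fun v => g (v 0) (v 1) * g (v 2) (v 3) with hT
  have hT0 : ∀ v, 0 ≤ T v := fun v => mul_nonneg (hg0 _ _) (hg0 _ _)
  have hsumT : ∑ v : Fin 4 → Fin m, T v = F * F := by
    rw [← Equiv.sum_comp (e4 (Fin m)) T]
    have : ∀ x : (Fin m × Fin m) × (Fin m × Fin m),
        T (e4 (Fin m) x) = g x.1.1 x.1.2 * g x.2.1 x.2.2 := fun x => rfl
    simp only [this, Fintype.sum_prod_type]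
    simp only [← Finset.mul_sum, ← Finset.sum_mul, hFdef]
  have hsumTπ : ∑ v : Fin 4 → Fin m, T (v ∘ π) = F * F := by
    rw [← hsumT]
    exact Equiv.sum_comp (precompEquiv π) T
  set S := (Finset.univ : Finset (Fin 4 → Fin m)).filter (fun v => ∀ i j, v i = v j → i = j)
    with hS
  have step1 : ∀ v ∈ S,
      |R (v 0) (v 1) * R (v 2) (v 3) * R (v (π 0)) (v (π 1)) * R (v (π 2)) (v (π 3))|
        ≤ (T v + T (v ∘ π)) / 2 := by
    intro v hv
    rw [hS, Finset.mem_filter] at hv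
    have hinj := hv.2
    have h01 : v 0 ≠ v 1 := fun h => absurd (hinj 0 1 h) (by decide)
    have h23 : v 2 ≠ v 3 := fun h => absurd (hinj 2 3 h) (by decide)
    have hp01 : v (π 0) ≠ v (π 1) := fun h => absurd (π.injective (hinj _ _ h)) (by decide)
    have hp23 : v (π 2) ≠ v (π 3) := fun h => absurd (π.injective (hinj _ _ h)) (by decide)
    have hTv : T v = (R (v 0) (v 1)) ^ 2 * (R (v 2) (v 3)) ^ 2 := by
      simp [T, g, if_neg h01, if_neg h23]
    have hTvπ : T (v ∘ π) = (R (v (π 0)) (v (π 1))) ^ 2 * (R (v (π 2)) (v (π 3))) ^ 2 := by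
      simp [T, g, Function.comp, if_neg hp01, if_neg hp23]
    rw [hTv, hTvπ]
    calc |R (v 0) (v 1) * R (v 2) (v 3) * R (v (π 0)) (v (π 1)) * R (v (π 2)) (v (π 3))|
        = |(R (v 0) (v 1) * R (v 2) (v 3)) * (R (v (π 0)) (v (π 1)) * R (v (π 2)) (v (π 3)))| := by
          ring_nf
      _ ≤ ((R (v 0) (v 1) * R (v 2) (v 3)) ^ 2
            + (R (v (π 0)) (v (π 1)) * R (v (π 2)) (v (π 3))) ^ 2) / 2 :=
          abs_mul_le_half_sq _ _
      _ = (R (v 0) (v 1) ^ 2 * R (v 2) (v 3) ^ 2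
            + R (v (π 0)) (v (π 1)) ^ 2 * R (v (π 2)) (v (π 3)) ^ 2) / 2 := by ring
  have hA : ∑ v ∈ S, T v ≤ ∑ v : Fin 4 → Fin m, T v :=
    Finset.sum_le_sum_of_subset_of_nonneg (Finset.filter_subset _ _) fun v _ _ => hT0 v
  have hB : ∑ v ∈ S, T (v ∘ π) ≤ ∑ v : Fin 4 → Fin m, T (v ∘ π) :=
    Finset.sum_le_sum_of_subset_of_nonneg (Finset.filter_subset _ _) fun v _ _ => hT0 _
  have main : ∑ v ∈ S,
      |R (v 0) (v 1) * R (v 2) (v 3) * R (v (π 0)) (v (π 1)) * R (v (π 2)) (v (π 3))|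
      ≤ F * F := by
    calc ∑ v ∈ S, |R (v 0) (v 1) * R (v 2) (v 3) * R (v (π 0)) (v (π 1)) * R (v (π 2)) (v (π 3))|
        ≤ ∑ v ∈ S, (T v + T (v ∘ π)) / 2 := Finset.sum_le_sum step1
      _ = ((∑ v ∈ S, T v) + ∑ v ∈ S, T (v ∘ π)) / 2 := by
          rw [← Finset.sum_div, Finset.sum_add_distrib]
      _ ≤ (F * F + F * F) / 2 := by
          have := hsumT; have := hsumTπ; linarith
      _ = F * F := by ring
  have hfrob4 : frobDistId R ^ 4 = F * F := by
    have : frobDistId R ^ 4 = (frobDistId R ^ 2) ^ 2 := by ring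
    rw [this, hfrob]; ring
  rw [hfrob4]
  nlinarith [mul_nonneg hF0 hF0, main]
end
end

section
/- Let R = (ρ_{pq}) be an m×m correlation matrix. Then Σ over all triples (p, q, r) of pairwise distinct indices in {1,…,m} of |ρ_{pq} · ρ_{qr} · ρ_{pr}| ≤ ‖R − I_m‖_F² + 2 ‖R − I_m‖_F⁴. -/
open Finset

noncomputable section

/-- The sum over all triples of pairwise distinct indices `(p, q, r)` of
`|ρ_{pq} ρ_{qr} ρ_{pr}|` is at most `‖R − I_m‖_F² + 2 ‖R − I_m‖_F⁴`. -/
theorem sum_triangle_corr_abs_le {m : ℕ} (R : Matrix (Fin m) (Fin m) ℝ)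
    (hR : IsCorrMatrix R) :
    ∑ x ∈ (Finset.univ : Finset (Fin m × Fin m × Fin m)).filter
        (fun x => x.1 ≠ x.2.1 ∧ x.1 ≠ x.2.2 ∧ x.2.1 ≠ x.2.2),
      |R x.1 x.2.1 * R x.2.1 x.2.2 * R x.1 x.2.2|
      ≤ frobDistId R ^ 2 + 2 * frobDistId R ^ 4 := by
  set B : Fin m → Fin m → ℝ := fun p q => |R p q - if p = q then (1 : ℝ) else 0| with hB
  have hBdiag : ∀ p, B p p = 0 := by intro p; simp [hB, hR.2 p]
  set S : ℝ := ∑ p, ∑ q, B p q ^ 2 with hSdef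
  have hSnn : 0 ≤ S := by positivity
  have hfrob : frobDistId R ^ 2 = S := by
    rw [frobDistId, Real.sq_sqrt (by positivity)]
    simp [hSdef, hB, sq_abs]
  have heq : ∀ x ∈ (Finset.univ : Finset (Fin m × Fin m × Fin m)).filter
        (fun x => x.1 ≠ x.2.1 ∧ x.1 ≠ x.2.2 ∧ x.2.1 ≠ x.2.2),
      |R x.1 x.2.1 * R x.2.1 x.2.2 * R x.1 x.2.2|
        = B x.1 x.2.1 * B x.2.1 x.2.2 * B x.1 x.2.2 := by
    intro x hx
    simp only [Finset.mem_filter, Finset.mem_univ, true_and] at hx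
    obtain ⟨h1, h2, h3⟩ := hx
    simp [hB, if_neg h1, if_neg h2, if_neg h3, abs_mul]
  have h1 : ∑ x ∈ (Finset.univ : Finset (Fin m × Fin m × Fin m)).filter
        (fun x => x.1 ≠ x.2.1 ∧ x.1 ≠ x.2.2 ∧ x.2.1 ≠ x.2.2),
      |R x.1 x.2.1 * R x.2.1 x.2.2 * R x.1 x.2.2|
      = ∑ x : Fin m × Fin m × Fin m, B x.1 x.2.1 * B x.2.1 x.2.2 * B x.1 x.2.2 := by
    rw [Finset.sum_congr rfl heq]
    refine Finset.sum_subset (Finset.filter_subset _ _) (fun x _ hx => ?_)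
    simp only [Finset.mem_filter, Finset.mem_univ, true_and, not_and_or, not_not] at hx
    rcases hx with h | h | h <;> simp [h, hBdiag]
  rw [h1]
  -- turn the sum over the product type into iterated sums
  have h2 : ∑ x : Fin m × Fin m × Fin m, B x.1 x.2.1 * B x.2.1 x.2.2 * B x.1 x.2.2
      = ∑ p, ∑ r, (∑ q, B p q * B q r) * B p r := by
    rw [Fintype.sum_prod_type]
    congr 1; ext p
    rw [Fintype.sum_prod_type, Finset.sum_comm]
    congr 1; ext r
    rw [Finset.sum_mul]
  rw [h2]
  -- Cauchy–Schwarz bound for the inner sums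
  have hCS : ∑ p, ∑ r, (∑ q, B p q * B q r) ^ 2 ≤ S * S := by
    have step : ∀ p r : Fin m, (∑ q, B p q * B q r) ^ 2
        ≤ (∑ q, B p q ^ 2) * (∑ q, B q r ^ 2) := fun p r =>
      Finset.sum_mul_sq_le_sq_mul_sq Finset.univ _ _
    calc ∑ p, ∑ r, (∑ q, B p q * B q r) ^ 2
        ≤ ∑ p, ∑ r, (∑ q, B p q ^ 2) * (∑ q, B q r ^ 2) := by
          exact Finset.sum_le_sum fun p _ => Finset.sum_le_sum fun r _ => step p r
      _ = (∑ p, ∑ q, B p q ^ 2) * (∑ r, ∑ q, B q r ^ 2) := by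
          rw [Finset.sum_mul_sum]
      _ = S * S := by rw [hSdef, Finset.sum_comm (f := fun q r => B q r ^ 2)]
  have hAM : ∑ p, ∑ r, (∑ q, B p q * B q r) * B p r
      ≤ (∑ p, ∑ r, ((∑ q, B p q * B q r) ^ 2 + B p r ^ 2)) / 2 := by
    rw [Finset.sum_div]
    refine Finset.sum_le_sum fun p _ => ?_
    rw [Finset.sum_div]
    refine Finset.sum_le_sum fun r _ => ?_
    nlinarith [sq_nonneg ((∑ q, B p q * B q r) - B p r)]
  have hsplit : ∑ p, ∑ r, ((∑ q, B p q * B q r) ^ 2 + B p r ^ 2)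
      = (∑ p, ∑ r, (∑ q, B p q * B q r) ^ 2) + S := by
    rw [hSdef]
    rw [← Finset.sum_add_distrib]
    congr 1; ext p
    rw [← Finset.sum_add_distrib]
  calc ∑ p, ∑ r, (∑ q, B p q * B q r) * B p r
      ≤ (∑ p, ∑ r, ((∑ q, B p q * B q r) ^ 2 + B p r ^ 2)) / 2 := hAM
    _ = ((∑ p, ∑ r, (∑ q, B p q * B q r) ^ 2) + S) / 2 := by rw [hsplit]
    _ ≤ (S * S + S) / 2 := by linarith [hCS]
    _ ≤ frobDistId R ^ 2 + 2 * frobDistId R ^ 4 := by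
        have : frobDistId R ^ 4 = S ^ 2 := by
          have : frobDistId R ^ 4 = (frobDistId R ^ 2) ^ 2 := by ring
          rw [this, hfrob]
        rw [hfrob, this]
        nlinarith [hSnn, sq_nonneg S]
end
end

section
/- For each k ∈ {5, 6, 7, 8} there exists a universal constant C > 0 (independent of m and R) such that for every m and every m×m correlation matrix R: Σ over all tuples (p₁, q₁, p₂, q₂, p₃, q₃, p₄, q₄) ∈ {1,…,m}⁸ with |{p₁, q₁, …, p₄, q₄}| = k (cardinality as a set) of ∏_{d=1}^{4} |ρ_{p_d q_d}| ≤ C · m⁴ · ‖R − I_m‖_F^{k−4}. -/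
open Finset

noncomputable section

/-!
View a pair `p q : Fin 4 → Fin m` as the multigraph on its set of values with the edges
`{p d, q d}`. If there are `k` values, a greedy matching has at least `k - 4` edges; since
`|ρ| ≤ 1` and matched edges join distinct indices, the term of `(p, q)` is at most the product of
`|(R - I) p q|` over `k - 4` matched edges. Write `(p, q) = v ∘ σ` with `v : Fin k → Fin m`
injective and `σ` one of at most `k ^ 8` patterns. For a fixed pattern, the sum over `v` is at most
`(∑ |R - I|) ^ (k - 4) * m ^ (8 - k)`: the matched vertices give the first factor, the `8 - k`
others the second. Finally `∑ |R - I| ≤ m ‖R - I‖_F` by Cauchy–Schwarz.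
-/

theorem Matrix.PosSemidef.two_mul_abs_apply_le {n : Type*} [Fintype n] [DecidableEq n]
    {M : Matrix n n ℝ} (hM : M.PosSemidef) (p q : n) :
    2 * |M p q| ≤ M p p + M q q := by
  have hsymm : M q p = M p q := hM.isHermitian.apply p q
  have hquad (s : ℝ) : 0 ≤ M p p + 2 * s * M p q + s ^ 2 * M q q := by
    have := hM.dotProduct_mulVec_nonneg (Pi.single p 1 + Pi.single q s)
    simp only [star_trivial, Matrix.mulVec_add, Matrix.mulVec_single, MulOpposite.op_one,
      one_smul, op_smul_eq_smul, dotProduct_add, add_dotProduct, single_dotProduct,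
      Matrix.col_apply, one_mul, hsymm, dotProduct_smul, smul_eq_mul] at this
    linarith
  have := hquad 1
  have := hquad (-1)
  cases abs_cases (M p q) <;> linarith

theorem IsCorrMatrix.abs_apply_le_one {m : ℕ} {R : Matrix (Fin m) (Fin m) ℝ}
    (hR : IsCorrMatrix R) (p q : Fin m) : |R p q| ≤ 1 := by
  have := hR.1.two_mul_abs_apply_le p q
  rw [hR.2, hR.2] at this
  linarith

theorem sum_abs_sub_one_le_mul_frobDistId {m : ℕ} (R : Matrix (Fin m) (Fin m) ℝ) :
    ∑ p, ∑ q, |(R - 1) p q| ≤ m * frobDistId R := by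
  have hcs := sq_sum_le_card_mul_sum_sq (s := (univ : Finset (Fin m × Fin m)))
    (f := fun z => |(R - 1) z.1 z.2|)
  simp only [sq_abs, card_univ, Fintype.card_prod, Fintype.card_fin, Fintype.sum_prod_type,
    Matrix.sub_apply, Matrix.one_apply] at hcs
  rw [frobDistId, ← Real.sqrt_sq (Nat.cast_nonneg m), ← Real.sqrt_mul (sq_nonneg _)]
  refine Real.le_sqrt_of_sq_le (hcs.trans_eq ?_)
  push_cast
  ring

variable {ι α β : Type*}

section Matching

/- `a b : ι → α` describe a multigraph on `α` whose edge `i` joins `a i` and `b i`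
(loops and multiple edges allowed). -/
variable [DecidableEq α] (a b : ι → α)

def endpoints (s : Finset ι) : Finset α := s.biUnion fun i => {a i, b i}

def IsMatching (s : Finset ι) : Prop :=
  (∀ i ∈ s, a i ≠ b i) ∧ (s : Set ι).PairwiseDisjoint fun i => ({a i, b i} : Finset α)

variable {a b}

theorem image_union_image_eq_endpoints (s : Finset ι) :
    s.image a ∪ s.image b = endpoints a b s := by
  ext x
  simp only [mem_union, mem_image, endpoints, mem_biUnion, mem_insert, mem_singleton]
  grind

theorem IsMatching.mono {s t : Finset ι} (ht : IsMatching a b t) (hst : s ⊆ t) :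
    IsMatching a b s :=
  ⟨fun i hi => ht.1 i (hst hi), ht.2.subset (coe_subset.2 hst)⟩

theorem IsMatching.card_endpoints {s : Finset ι} (hs : IsMatching a b s) :
    (endpoints a b s).card = 2 * s.card := by
  rw [endpoints, card_biUnion hs.2, sum_congr rfl fun i hi => card_pair (hs.1 i hi),
    sum_const, smul_eq_mul, mul_comm]

theorem IsMatching.insert [DecidableEq ι] {s : Finset ι} {j : ι} (hs : IsMatching a b s)
    (hj : a j ≠ b j) (hdisj : Disjoint {a j, b j} (endpoints a b s)) :
    IsMatching a b (insert j s) := by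
  refine ⟨forall_mem_insert _ _ _ |>.2 ⟨hj, hs.1⟩, ?_⟩
  rw [coe_insert]
  refine hs.2.insert fun i hi _ => hdisj.mono_right ?_
  exact subset_biUnion_of_mem (fun i => ({a i, b i} : Finset α)) hi

/- Greedy matching: an edge that cannot be added to the matching is a loop or meets an
already covered vertex, so it covers at most one new vertex. -/
theorem exists_isMatching_subset (s : Finset ι) :
    ∃ M ⊆ s, IsMatching a b M ∧ (endpoints a b s).card ≤ s.card + M.card := by
  classical
  induction s using Finset.induction_on with
  | empty => exact ⟨∅, subset_refl _, ⟨by simp, by simp⟩, by simp [endpoints]⟩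
  | insert j s hj ih =>
    obtain ⟨M, hMs, hM, hcard⟩ := ih
    have hsplit : endpoints a b (insert j s) = {a j, b j} ∪ endpoints a b s := biUnion_insert
    have hunion := card_union_add_card_inter ({a j, b j} : Finset α) (endpoints a b s)
    have hpair : ({a j, b j} : Finset α).card ≤ 2 := card_le_two
    rw [hsplit, card_insert_of_notMem hj]
    by_cases hext : a j ≠ b j ∧ Disjoint {a j, b j} (endpoints a b s)
    · refine ⟨insert j M, insert_subset_insert j hMs,
        hM.insert hext.1 (hext.2.mono_right (biUnion_subset_biUnion_of_subset_left _ hMs)), ?_⟩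
      rw [card_insert_of_notMem fun h => hj (hMs h)]
      omega
    · refine ⟨M, hMs.trans (subset_insert j s), hM, ?_⟩
      have hnew : ({a j, b j} : Finset α).card ≤ 1 + ({a j, b j} ∩ endpoints a b s).card := by
        rcases not_and_or.1 hext with hloop | hmeet
        · simp [not_not.1 hloop]
        · have := card_pos.2 (not_disjoint_iff_nonempty_inter.1 hmeet)
          omega
      omega

theorem exists_isMatching_card_eq [Fintype ι] (a b : ι → α) :
    ∃ M, IsMatching a b M ∧ M.card = (endpoints a b univ).card - Fintype.card ι := by
  obtain ⟨M, -, hM, hcard⟩ := exists_isMatching_subset (a := a) (b := b) univ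
  obtain ⟨N, hNM, hN⟩ := exists_subset_card_eq (s := M)
    (n := (endpoints a b univ).card - Fintype.card ι) (by rw [card_univ] at hcard; omega)
  exact ⟨N, hM.mono hNM, hN⟩

end Matching

section Counting

variable [Fintype α] [DecidableEq α] [Fintype β] {a b : ι → α}

theorem IsMatching.sum_prod_le {M : Finset ι} (hM : IsMatching a b M) (g : β → β → ℝ)
    (hg : ∀ p q, 0 ≤ g p q) :
    ∑ v : α → β, ∏ i ∈ M, g (v (a i)) (v (b i)) ≤
      (∑ p, ∑ q, g p q) ^ M.card * Fintype.card β ^ (Fintype.card α - 2 * M.card) := by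
  classical
  -- `v` is determined by its values at the ends of the edges of `M` and off `endpoints a b M`.
  let Ψ : (α → β) → (M → β × β) × ({x // x ∉ endpoints a b M} → β) :=
    fun v => (fun i => (v (a i), v (b i)), fun x => v x)
  have hΨ : Function.Injective Ψ := by
    intro v w h
    funext x
    by_cases hx : x ∈ endpoints a b M
    · obtain ⟨i, hi, hx⟩ := mem_biUnion.1 hx
      have hvw := congrFun (congrArg Prod.fst h) ⟨i, hi⟩
      rcases mem_insert.1 hx with rfl | hx
      · exact congrArg Prod.fst hvw
      · rw [mem_singleton.1 hx]
        exact congrArg Prod.snd hvw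
    · exact congrFun (congrArg Prod.snd h) ⟨x, hx⟩
  let W : (M → β × β) × ({x // x ∉ endpoints a b M} → β) → ℝ :=
    fun y => ∏ i, g (y.1 i).1 (y.1 i).2
  calc ∑ v : α → β, ∏ i ∈ M, g (v (a i)) (v (b i)) = ∑ v, W (Ψ v) :=
        sum_congr rfl fun v _ => (prod_coe_sort M fun i => g (v (a i)) (v (b i))).symm
    _ = ∑ y ∈ univ.image Ψ, W y := (sum_image fun v _ w _ h => hΨ h).symm
    _ ≤ ∑ y, W y := sum_le_univ_sum_of_nonneg fun y => prod_nonneg fun i _ => hg _ _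
    _ = _ := by
      simp only [W, Fintype.sum_prod_type, sum_const, card_univ, Fintype.card_pi, prod_const,
        Fintype.card_subtype_compl, Fintype.card_coe, nsmul_eq_mul, Nat.cast_pow]
      rw [← mul_sum, ← Fintype.prod_sum fun (_ : M) (z : β × β) => g z.1 z.2, prod_const,
        card_univ, Fintype.card_coe, hM.card_endpoints, Fintype.sum_prod_type, mul_comm]

variable [DecidableEq β]

theorem IsMatching.sum_injective_prod_abs_le [Fintype ι] {M : Finset ι} (hM : IsMatching a b M)
    {R : Matrix β β ℝ} (hR : ∀ p q, |R p q| ≤ 1) :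
    ∑ v ∈ univ.filter (fun v : α → β => Function.Injective v), ∏ i, |R (v (a i)) (v (b i))| ≤
      (∑ p, ∑ q, |(R - 1) p q|) ^ M.card * Fintype.card β ^ (Fintype.card α - 2 * M.card) := by
  refine le_trans ?_ (hM.sum_prod_le _ fun p q => abs_nonneg _)
  refine (sum_le_sum fun v hv => ?_).trans
    (sum_le_univ_sum_of_nonneg fun v => prod_nonneg fun _ _ => abs_nonneg _)
  have hv : Function.Injective v := (mem_filter.1 hv).2
  calc ∏ i, |R (v (a i)) (v (b i))| ≤ ∏ i ∈ M, |R (v (a i)) (v (b i))| :=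
        prod_le_prod_of_subset_of_le_one (subset_univ M) (fun _ _ => abs_nonneg _)
          fun _ _ _ => hR _ _
    _ = ∏ i ∈ M, |(R - 1) (v (a i)) (v (b i))| := prod_congr rfl fun i hi => by
        rw [Matrix.sub_apply, Matrix.one_apply_ne (hv.ne (hM.1 i hi)), sub_zero]

theorem sum_injective_prod_abs_le_of_card_image_union [Fintype ι] {R : Matrix β β ℝ}
    (hR : ∀ p q, |R p q| ≤ 1) (hab : (image a univ ∪ image b univ).card = Fintype.card α)
    (hι : Fintype.card ι ≤ Fintype.card α) :
    ∑ v ∈ univ.filter (fun v : α → β => Function.Injective v), ∏ i, |R (v (a i)) (v (b i))| ≤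
      (∑ p, ∑ q, |(R - 1) p q|) ^ (Fintype.card α - Fintype.card ι) *
        Fintype.card β ^ (2 * Fintype.card ι - Fintype.card α) := by
  obtain ⟨M, hM, hcard⟩ := exists_isMatching_card_eq a b
  rw [← image_union_image_eq_endpoints, hab] at hcard
  have hfree : Fintype.card α - 2 * M.card = 2 * Fintype.card ι - Fintype.card α := by omega
  rw [← hcard, ← hfree]
  exact hM.sum_injective_prod_abs_le hR

end Counting

theorem card_image_comp_union_image_comp [DecidableEq α] [DecidableEq β] {v : α → β}
    (hv : Function.Injective v) (a b : ι → α) (s : Finset ι) :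
    (image (v ∘ a) s ∪ image (v ∘ b) s).card = (image a s ∪ image b s).card := by
  rw [← image_image, ← image_image, ← image_union, card_image_of_injective _ hv]

/- Every pair `x` with `k` distinct values is `(v ∘ σ.1, v ∘ σ.2)` for an injective
`v : Fin k → β` enumerating them and the pattern `σ` of their indices. -/
theorem sum_filter_card_le_sum_pattern [Fintype ι] [DecidableEq ι] [Fintype β] [DecidableEq β]
    (k : ℕ) (F : (ι → β) × (ι → β) → ℝ) (hF : ∀ x, 0 ≤ F x) :
    ∑ x ∈ univ.filter (fun x : (ι → β) × (ι → β) => (image x.1 univ ∪ image x.2 univ).card = k),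
        F x ≤
      ∑ σ ∈ univ.filter
          (fun σ : (ι → Fin k) × (ι → Fin k) => (image σ.1 univ ∪ image σ.2 univ).card = k),
        ∑ v ∈ univ.filter (fun v : Fin k → β => Function.Injective v), F (v ∘ σ.1, v ∘ σ.2) := by
  rw [← sum_product']
  refine le_trans ?_ (sum_image_le_of_nonneg (f := F)
    (g := fun y : ((ι → Fin k) × (ι → Fin k)) × (Fin k → β) => (y.2 ∘ y.1.1, y.2 ∘ y.1.2))
    fun _ _ => hF _)
  refine sum_le_sum_of_subset_of_nonneg (fun x hx => ?_) fun _ _ _ => hF _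
  set s := image x.1 univ ∪ image x.2 univ
  have hs : s.card = k := (mem_filter.1 hx).2
  let e : s ≃ Fin k := Fintype.equivFinOfCardEq (by rw [Fintype.card_coe, hs])
  let v : Fin k → β := fun i => e.symm i
  have hv : Function.Injective v := Subtype.val_injective.comp e.symm.injective
  let σ : (ι → Fin k) × (ι → Fin k) :=
    (fun i => e ⟨x.1 i, mem_union_left _ (mem_image_of_mem _ (mem_univ i))⟩,
     fun i => e ⟨x.2 i, mem_union_right _ (mem_image_of_mem _ (mem_univ i))⟩)
  have hσ₁ : v ∘ σ.1 = x.1 := funext fun i => by simp [v, σ]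
  have hσ₂ : v ∘ σ.2 = x.2 := funext fun i => by simp [v, σ]
  refine mem_image.2 ⟨(σ, v), mem_product.2 ⟨mem_filter.2 ⟨mem_univ _, ?_⟩,
    mem_filter.2 ⟨mem_univ _, hv⟩⟩, by simp only [hσ₁, hσ₂]⟩
  rw [← card_image_comp_union_image_comp hv, hσ₁, hσ₂, hs]

theorem sum_filter_card_image_union_prod_abs_le [Fintype ι] [DecidableEq ι] [Fintype β]
    [DecidableEq β] {R : Matrix β β ℝ} (hR : ∀ p q, |R p q| ≤ 1) {k : ℕ}
    (hk : Fintype.card ι ≤ k) :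
    ∑ x ∈ univ.filter (fun x : (ι → β) × (ι → β) => (image x.1 univ ∪ image x.2 univ).card = k),
        ∏ i, |R (x.1 i) (x.2 i)| ≤
      k ^ (2 * Fintype.card ι) * ((∑ p, ∑ q, |(R - 1) p q|) ^ (k - Fintype.card ι) *
        Fintype.card β ^ (2 * Fintype.card ι - k)) := by
  refine (sum_filter_card_le_sum_pattern k (fun x => ∏ i, |R (x.1 i) (x.2 i)|)
    fun _ => prod_nonneg fun _ _ => abs_nonneg _).trans ?_
  refine (sum_le_sum (g := fun _ => (∑ p, ∑ q, |(R - 1) p q|) ^ (k - Fintype.card ι) *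
    (Fintype.card β : ℝ) ^ (2 * Fintype.card ι - k)) fun σ hσ => ?_).trans ?_
  · have hσ : (image σ.1 univ ∪ image σ.2 univ).card = Fintype.card (Fin k) := by
      rw [Fintype.card_fin]
      exact (mem_filter.1 hσ).2
    have := sum_injective_prod_abs_le_of_card_image_union hR hσ (by rwa [Fintype.card_fin])
    rw [Fintype.card_fin] at this
    exact this
  rw [sum_const, nsmul_eq_mul]
  gcongr
  calc ((univ.filter _).card : ℝ) ≤ (univ : Finset ((ι → Fin k) × (ι → Fin k))).card := by
        exact_mod_cast card_filter_le _ _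
    _ = k ^ (2 * Fintype.card ι) := by simp [two_mul, pow_add]

/-- For each `k ∈ {5, 6, 7, 8}` there is a universal constant `C > 0` such that for
every `m` and every correlation matrix `R`, the sum over all tuples
`(p₁, q₁, …, p₄, q₄) ∈ {1,…,m}⁸` whose underlying set has cardinality `k` of
`∏_{d=1}^4 |ρ_{p_d q_d}|` is at most `C m⁴ ‖R − I_m‖_F^{k−4}`. -/
theorem sum_prod_corr_abs_card_le (k : ℕ) (hk : k ∈ ({5, 6, 7, 8} : Finset ℕ)) :
    ∃ C : ℝ, 0 < C ∧ ∀ (m : ℕ) (R : Matrix (Fin m) (Fin m) ℝ), IsCorrMatrix R →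
      ∑ x ∈ (Finset.univ : Finset ((Fin 4 → Fin m) × (Fin 4 → Fin m))).filter
          (fun x => (Finset.image x.1 Finset.univ ∪ Finset.image x.2 Finset.univ).card = k),
        ∏ d, |R (x.1 d) (x.2 d)|
        ≤ C * (m : ℝ) ^ 4 * frobDistId R ^ (k - 4) := by
  obtain ⟨hk4, hk8⟩ : 4 ≤ k ∧ k ≤ 8 := by simp only [mem_insert, mem_singleton] at hk; omega
  refine ⟨k ^ 8, by positivity, fun m R hR => ?_⟩
  have hsum := sum_filter_card_image_union_prod_abs_le (ι := Fin 4)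
    (IsCorrMatrix.abs_apply_le_one hR) (by simpa using hk4)
  rw [Fintype.card_fin, Fintype.card_fin] at hsum
  have hm : (m : ℝ) ^ (k - 4) * (m : ℝ) ^ (8 - k) = (m : ℝ) ^ 4 := by
    rw [← pow_add]
    congr 1
    omega
  refine hsum.trans ?_
  calc (k : ℝ) ^ 8 * ((∑ p, ∑ q, |(R - 1) p q|) ^ (k - 4) * (m : ℝ) ^ (8 - k))
    _ ≤ (k : ℝ) ^ 8 * ((m * frobDistId R) ^ (k - 4) * (m : ℝ) ^ (8 - k)) := by
        gcongr
        exact sum_abs_sub_one_le_mul_frobDistId R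
    _ = k ^ 8 * (m : ℝ) ^ 4 * frobDistId R ^ (k - 4) := by
        rw [mul_pow, ← hm]
        ring
end
end

section
/- Let π = (π₁, …, π₈) and τ = (τ₁, …, τ₈) be two fixed rearrangements of the eight index symbols p₁, q₁, p₂, q₂, p₃, q₃, p₄, q₄, applied to each tuple of indices. For each k ∈ {5, 6, 7, 8} there exists a universal constant C > 0 such that for every m and every m×m correlation matrix R: Σ over all tuples (p₁, q₁, …, p₄, q₄) ∈ {1,…,m}⁸ with |{p₁, q₁, …, p₄, q₄}| = k of ∏_{d' ∈ {1,3,5,7}} |ρ_{π_{d'} π_{d'+1}} · ρ_{τ_{d'} τ_{d'+1}}| ≤ C · m^{8−k} · ‖R − I_m‖_F^{2(k−4)}. -/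
open Finset

noncomputable section

/-!
By AM–GM each summand is at most the mean of `∏ ρ²` over the `π`-pairs and over the `τ`-pairs,
and relabelling the tuple turns both into the sum, over four pairs `(p_d, q_d)` spanning exactly
`k` indices, of `∏_d ρ_{p_d q_d}²`. Reveal the pairs one at a time: a pair bringing no new index
costs `O(1)` since `|ρ| ≤ 1`, one new index costs a factor `m`, and two new (distinct) indices
cost at most `∑_{p ≠ q} ρ_{pq}² = ‖R - I‖_F²`. With `i` pairs of the second kind and `j` of the
third, `i + 2j = k` and `i + j ≤ 4`, so the sum is `O(∑ m^i ‖R - I‖_F^{2j})`, and since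
`‖R - I‖_F ≤ m` every term is at most `m^(8-k) ‖R - I‖_F^(2(k-4))`.
-/

lemma sum_le_card_of_subset_of_le_one {ι : Type*} {f : ι → ℝ} (hf0 : ∀ i, 0 ≤ f i)
    (hf1 : ∀ i, f i ≤ 1) {s T : Finset ι} (h : s ⊆ T) : ∑ i ∈ s, f i ≤ #T := by
  calc ∑ i ∈ s, f i ≤ ∑ i ∈ T, f i := sum_le_sum_of_subset_of_nonneg h fun i _ _ => hf0 i
    _ ≤ #T • (1 : ℝ) := sum_le_card_nsmul _ _ _ fun i _ => hf1 i
    _ = #T := by simp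

lemma sum_comp_le_sum_of_injective {ι κ : Type*} {s : Finset ι} {t : Finset κ} {g : ι → κ}
    (hg : Function.Injective g) (hst : ∀ i ∈ s, g i ∈ t) {f : κ → ℝ} (hf : ∀ k ∈ t, 0 ≤ f k) :
    ∑ i ∈ s, f (g i) ≤ ∑ k ∈ t, f k := by
  classical
  rw [← sum_image hg.injOn]
  exact sum_le_sum_of_subset_of_nonneg (image_subset_iff.2 hst) fun k hk _ => hf k hk

lemma prod_abs_mul_abs_le {ι : Type*} (s : Finset ι) (a b : ι → ℝ) :
    ∏ i ∈ s, |a i| * |b i| ≤ (∏ i ∈ s, a i ^ 2 + ∏ i ∈ s, b i ^ 2) / 2 := by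
  rw [prod_mul_distrib, ← abs_prod, ← abs_prod, prod_pow, prod_pow, ← sq_abs (∏ i ∈ s, a i),
    ← sq_abs (∏ i ∈ s, b i)]
  linarith [two_mul_le_add_sq |∏ i ∈ s, a i| |∏ i ∈ s, b i|]

section VertexSet

variable {α ι κ : Type*}

def vertexSet [DecidableEq α] [Fintype ι] (w : ι → α × α) : Finset α :=
  univ.biUnion fun i => {(w i).1, (w i).2}

lemma vertexSet_cons [DecidableEq α] {n : ℕ} (p : α × α) (w : Fin n → α × α) :
    vertexSet (Fin.cons p w : Fin (n + 1) → α × α) = {p.1, p.2} ∪ vertexSet w := by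
  ext x
  simp [vertexSet, Fin.exists_fin_succ, or_assoc]

def pairUpEquiv (e : ι × Fin 2 ≃ κ) : (κ → α) ≃ (ι → α × α) :=
  (e.arrowCongr (Equiv.refl α)).symm.trans <|
    (Equiv.curry ι (Fin 2) α).trans (Equiv.arrowCongr (Equiv.refl ι) (piFinTwoEquiv fun _ => α))

@[simp]
lemma pairUpEquiv_apply (e : ι × Fin 2 ≃ κ) (v : κ → α) (i : ι) :
    pairUpEquiv e v i = (v (e (i, 0)), v (e (i, 1))) :=
  rfl

lemma vertexSet_pairUpEquiv [DecidableEq α] [Fintype ι] [Fintype κ] (e : ι × Fin 2 ≃ κ)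
    (v : κ → α) : vertexSet (pairUpEquiv e v) = univ.image v := by
  ext x
  simp only [vertexSet, pairUpEquiv_apply, mem_biUnion, mem_univ, true_and, mem_insert,
    mem_singleton, mem_image]
  constructor
  · rintro ⟨i, rfl | rfl⟩ <;> exact ⟨_, rfl⟩
  · rintro ⟨j, rfl⟩
    obtain ⟨⟨i, b⟩, rfl⟩ := e.surjective j
    fin_cases b <;> exact ⟨i, by simp⟩

end VertexSet

section PairSum

variable {α : Type*} [Fintype α] [DecidableEq α] (W : α × α → ℝ)

def pairSum (S : Finset α) (n t : ℕ) : ℝ :=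
  ∑ w : Fin n → α × α with #(S ∪ vertexSet w) = t, ∏ i, W (w i)

lemma pairSum_zero (S : Finset α) (t : ℕ) : pairSum W S 0 t = if #S = t then 1 else 0 := by
  rw [pairSum, sum_filter, Fintype.sum_unique]
  simp [vertexSet]

lemma pairSum_succ (S : Finset α) (n t : ℕ) :
    pairSum W S (n + 1) t = ∑ p, W p * pairSum W (S ∪ {p.1, p.2}) n t := by
  simp only [pairSum, sum_filter, mul_sum]
  rw [← (Fin.consEquiv fun _ => α × α).sum_comp, Fintype.sum_prod_type]
  refine sum_congr rfl fun p _ => sum_congr rfl fun w _ => ?_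
  simp [Fin.consEquiv, vertexSet_cons, Fin.prod_univ_succ, mul_ite]

lemma sum_card_image_eq_pairSum {κ : Type*} [Fintype κ] [DecidableEq κ] {n : ℕ}
    (e : Fin n × Fin 2 ≃ κ) (k : ℕ) :
    ∑ v : κ → α with #(univ.image v) = k, ∏ i, W (pairUpEquiv e v i) = pairSum W ∅ n k :=
  sum_equiv (pairUpEquiv e) (fun v => by simp [vertexSet_pairUpEquiv]) (fun _ _ => rfl)

end PairSum

section NewCount

variable {α : Type*} [DecidableEq α]

def newCount (S : Finset α) (p : α × α) : ℕ := #({p.1, p.2} \ S)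

lemma card_union_pair (S : Finset α) (p : α × α) : #(S ∪ {p.1, p.2}) = #S + newCount S p := by
  rw [newCount, union_comm, ← card_sdiff_add_card, add_comm]

lemma newCount_le_two (S : Finset α) (p : α × α) : newCount S p ≤ 2 :=
  (card_le_card sdiff_subset).trans card_le_two

variable [Fintype α] {W : α × α → ℝ}

def offDiagMass (W : α × α → ℝ) : ℝ := ∑ p : α × α with p.1 ≠ p.2, W p

lemma offDiagMass_nonneg (hW0 : ∀ p, 0 ≤ W p) : 0 ≤ offDiagMass W :=
  sum_nonneg fun p _ => hW0 p

lemma offDiagMass_le (hW0 : ∀ p, 0 ≤ W p) (hW1 : ∀ p, W p ≤ 1) :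
    offDiagMass W ≤ Fintype.card α ^ 2 :=
  (sum_le_card_of_subset_of_le_one hW0 hW1 (subset_univ _)).trans (by simp [sq])

lemma sum_newCount_eq_zero_le (hW0 : ∀ p, 0 ≤ W p) (hW1 : ∀ p, W p ≤ 1) (S : Finset α) :
    ∑ p with newCount S p = 0, W p ≤ #S ^ 2 := by
  refine (sum_le_card_of_subset_of_le_one hW0 hW1 (T := S ×ˢ S) fun p hp => ?_).trans
    (by simp [sq])
  simp only [newCount, mem_filter, card_eq_zero, sdiff_eq_empty_iff_subset, insert_subset_iff,
    singleton_subset_iff] at hp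
  exact mem_product.2 hp.2

lemma sum_newCount_eq_one_le (hW0 : ∀ p, 0 ≤ W p) (hW1 : ∀ p, W p ≤ 1) (S : Finset α) :
    ∑ p with newCount S p = 1, W p ≤ (2 * #S + 1) * Fintype.card α := by
  refine (sum_le_card_of_subset_of_le_one hW0 hW1
    (T := S ×ˢ univ ∪ univ ×ˢ S ∪ (univ : Finset α).diag) fun p hp => ?_).trans ?_
  · by_contra hT
    simp only [mem_union, mem_product, mem_univ, and_true, true_and, mem_diag, not_or] at hT
    have hp := (mem_filter.1 hp).2
    rw [newCount, sdiff_eq_self_of_disjoint (by simp [hT.1.1, hT.1.2]), card_pair hT.2] at hp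
    exact absurd hp (by norm_num)
  · calc (#(S ×ˢ univ ∪ univ ×ˢ S ∪ (univ : Finset α).diag) : ℝ)
        ≤ #(S ×ˢ univ) + #((univ : Finset α) ×ˢ S) + #(univ : Finset α).diag := by
          exact_mod_cast (card_union_le _ _).trans (Nat.add_le_add_right (card_union_le _ _) _)
      _ = _ := by simp only [card_product, diag_card, card_univ]; push_cast; ring

lemma sum_newCount_eq_two_le (hW0 : ∀ p, 0 ≤ W p) (S : Finset α) :
    ∑ p with newCount S p = 2, W p ≤ offDiagMass W := by
  refine sum_le_sum_of_subset_of_nonneg (fun p hp => ?_) fun p _ _ => hW0 p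
  simp only [mem_filter, mem_univ, true_and] at hp ⊢
  intro h
  have : newCount S p ≤ 1 := (card_le_card sdiff_subset).trans (by simp [h])
  omega

end NewCount

section WalkBound

variable {M D : ℝ}

/-- `M ^ i * D ^ j` summed over the ways `n` pairs can add `t - c` new indices, `i` of the pairs
adding one and `j` adding two. -/
def walkBound (M D : ℝ) (n c t : ℕ) : ℝ :=
  ∑ ij ∈ range (n + 1) ×ˢ range (n + 1) with c + ij.1 + 2 * ij.2 = t ∧ ij.1 + ij.2 ≤ n,
    M ^ ij.1 * D ^ ij.2

lemma walkBound_zero (c t : ℕ) : walkBound M D 0 c t = if c = t then 1 else 0 := by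
  split_ifs with h <;> simp [walkBound, Finset.filter_singleton, h]

variable (hM : 0 ≤ M) (hD : 0 ≤ D)
include hM hD

lemma walkBound_nonneg (n c t : ℕ) : 0 ≤ walkBound M D n c t :=
  sum_nonneg fun _ _ => by positivity

lemma pow_mul_pow_mul_walkBound_le {a b : ℕ} (hab : a + b ≤ 1) (n c t : ℕ) :
    M ^ a * D ^ b * walkBound M D n (c + a + 2 * b) t ≤ walkBound M D (n + 1) c t := by
  unfold walkBound
  rw [mul_sum]
  calc _ = ∑ ij ∈ range (n + 1) ×ˢ range (n + 1)
        with c + a + 2 * b + ij.1 + 2 * ij.2 = t ∧ ij.1 + ij.2 ≤ n,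
        (fun ij : ℕ × ℕ => M ^ ij.1 * D ^ ij.2) (Prod.map (· + a) (· + b) ij) :=
        sum_congr rfl fun _ _ => by simp only [Prod.map_fst, Prod.map_snd, pow_add]; ring
    _ ≤ _ := by
      refine sum_comp_le_sum_of_injective (f := fun ij : ℕ × ℕ => M ^ ij.1 * D ^ ij.2)
        ((add_left_injective a).prodMap (add_left_injective b)) (fun ij hij => ?_)
        fun _ _ => by positivity
      simp only [mem_filter, mem_product, mem_range, Prod.map_fst, Prod.map_snd] at hij ⊢
      omega

lemma pow_mul_pow_le_pow_mul_pow (hDM : D ≤ M ^ 2) {i j a b : ℕ} (h : i + 2 * j = a + 2 * b)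
    (hbj : b ≤ j) : M ^ i * D ^ j ≤ M ^ a * D ^ b := by
  obtain ⟨u, rfl⟩ := Nat.exists_eq_add_of_le hbj
  obtain rfl : a = i + 2 * u := by omega
  calc M ^ i * D ^ (b + u) = M ^ i * D ^ u * D ^ b := by ring
    _ ≤ M ^ i * (M ^ 2) ^ u * D ^ b := by gcongr
    _ = M ^ (i + 2 * u) * D ^ b := by ring

lemma walkBound_le (hDM : D ≤ M ^ 2) {n c t a b : ℕ} (ht : c + a + 2 * b = t) (hn : a + b = n) :
    walkBound M D n c t ≤ (n + 1) ^ 2 * (M ^ a * D ^ b) := by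
  unfold walkBound
  refine (sum_le_card_nsmul _ _ (M ^ a * D ^ b) fun ij hij => ?_).trans ?_
  · simp only [mem_filter] at hij
    exact pow_mul_pow_le_pow_mul_pow hM hD hDM (by omega) (by omega)
  · rw [nsmul_eq_mul]
    gcongr
    exact_mod_cast (card_filter_le _ _).trans_eq (by simp [sq])

end WalkBound

/-- With `c` indices already seen, at most `c ^ 2` pairs add no new index and at most
`(2c + 1) · card α` pairs add one; hence the coefficients. -/
def pairConst : ℕ → ℕ → ℕ
  | 0, _ => 1
  | n + 1, c => c ^ 2 * pairConst n c + (2 * c + 1) * pairConst n (c + 1) + pairConst n (c + 2)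

theorem pairSum_le_walkBound {α : Type*} [Fintype α] [DecidableEq α] {W : α × α → ℝ}
    (hW0 : ∀ p, 0 ≤ W p) (hW1 : ∀ p, W p ≤ 1) (n : ℕ) (S : Finset α) (t : ℕ) :
    pairSum W S n t ≤ pairConst n #S * walkBound (Fintype.card α) (offDiagMass W) n #S t := by
  induction n generalizing S with
  | zero => simp [pairSum_zero, walkBound_zero, pairConst]
  | succ n ih =>
    set M : ℝ := (Fintype.card α : ℝ)
    set D := offDiagMass W
    set c := #S
    have hM : 0 ≤ M := Nat.cast_nonneg _
    have hD : 0 ≤ D := offDiagMass_nonneg hW0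
    set B : ℕ → ℝ := fun δ => pairConst n (c + δ) * walkBound M D n (c + δ) t
    have hB (δ : ℕ) : 0 ≤ B δ := mul_nonneg (Nat.cast_nonneg _) (walkBound_nonneg hM hD _ _ _)
    set w := walkBound M D (n + 1) c t
    have h0 : walkBound M D n c t ≤ w := by
      simpa using pow_mul_pow_mul_walkBound_le hM hD (a := 0) (b := 0) (by norm_num) n c t
    have h1 : M * walkBound M D n (c + 1) t ≤ w := by
      simpa using pow_mul_pow_mul_walkBound_le hM hD (a := 1) (b := 0) (by norm_num) n c t
    have h2 : D * walkBound M D n (c + 2) t ≤ w := by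
      simpa using pow_mul_pow_mul_walkBound_le hM hD (a := 0) (b := 1) (by norm_num) n c t
    calc pairSum W S (n + 1) t = ∑ p, W p * pairSum W (S ∪ {p.1, p.2}) n t :=
          pairSum_succ W S n t
      _ ≤ ∑ p, W p * B (newCount S p) := by
        gcongr with p
        · exact hW0 p
        · simpa only [B, card_union_pair] using ih (S ∪ {p.1, p.2})
      _ = ∑ δ ∈ range 3, (∑ p with newCount S p = δ, W p) * B δ := by
        rw [← sum_fiberwise_of_maps_to (g := newCount S) (t := range 3)
          fun p _ => mem_range.2 (Nat.lt_succ_of_le (newCount_le_two S p))]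
        refine sum_congr rfl fun δ _ => ?_
        rw [sum_mul]
        exact sum_congr rfl fun p hp => by rw [(mem_filter.1 hp).2]
      _ ≤ c ^ 2 * B 0 + (2 * c + 1) * M * B 1 + D * B 2 := by
        simp only [sum_range_succ, sum_range_zero, zero_add]
        exact add_le_add_three
          (mul_le_mul_of_nonneg_right (sum_newCount_eq_zero_le hW0 hW1 S) (hB 0))
          (mul_le_mul_of_nonneg_right (sum_newCount_eq_one_le hW0 hW1 S) (hB 1))
          (mul_le_mul_of_nonneg_right (sum_newCount_eq_two_le hW0 S) (hB 2))
      _ = c ^ 2 * pairConst n c * walkBound M D n c t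
          + (2 * c + 1) * pairConst n (c + 1) * (M * walkBound M D n (c + 1) t)
          + pairConst n (c + 2) * (D * walkBound M D n (c + 2) t) := by
        simp only [B, add_zero]; ring
      _ ≤ c ^ 2 * pairConst n c * w + (2 * c + 1) * pairConst n (c + 1) * w
          + pairConst n (c + 2) * w := by gcongr
      _ = pairConst (n + 1) c * w := by simp only [pairConst]; push_cast; ring

namespace IsCorrMatrix

variable {m : ℕ} {R : Matrix (Fin m) (Fin m) ℝ}

lemma sq_le_one (h : IsCorrMatrix R) (a b : Fin m) : R a b ^ 2 ≤ 1 := by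
  have := R.toBilin'.apply_sq_le_of_symm
    (fun x => by simpa [Matrix.toBilin'_apply'] using h.1.dotProduct_mulVec_nonneg x)
    (LinearMap.BilinForm.isSymm_iff.1 <|
      Matrix.isSymm_toBilin'_iff_isSymm.2 (Matrix.isHermitian_iff_isSymm.1 h.1.isHermitian))
    (Pi.single a 1) (Pi.single b 1)
  simpa [h.2] using this

lemma frobDistId_sq (h : IsCorrMatrix R) :
    frobDistId R ^ 2 = offDiagMass fun p : Fin m × Fin m => R p.1 p.2 ^ 2 := by
  rw [frobDistId, Real.sq_sqrt (by positivity), offDiagMass, sum_filter, ← Fintype.sum_prod_type']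
  refine sum_congr rfl fun p _ => ?_
  by_cases hp : p.1 = p.2 <;> simp [hp, h.2]

end IsCorrMatrix

lemma sum_prod_abs_mul_abs_le_pairSum {α κ : Type*} [Fintype α] [DecidableEq α] [Fintype κ]
    [DecidableEq κ] {n : ℕ} (A : α → α → ℝ) (e e' : Fin n × Fin 2 ≃ κ) (k : ℕ) :
    ∑ v : κ → α with #(univ.image v) = k,
        ∏ i, |A (v (e (i, 0))) (v (e (i, 1)))| * |A (v (e' (i, 0))) (v (e' (i, 1)))|
      ≤ pairSum (fun p => A p.1 p.2 ^ 2) ∅ n k := by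
  calc _ ≤ ∑ v : κ → α with #(univ.image v) = k,
        (∏ i, A (v (e (i, 0))) (v (e (i, 1))) ^ 2
          + ∏ i, A (v (e' (i, 0))) (v (e' (i, 1))) ^ 2) / 2 :=
        sum_le_sum fun v _ => prod_abs_mul_abs_le _ _ _
    _ = _ := by
      have h := sum_card_image_eq_pairSum (fun p => A p.1 p.2 ^ 2) e k
      have h' := sum_card_image_eq_pairSum (fun p => A p.1 p.2 ^ 2) e' k
      simp only [pairUpEquiv_apply] at h h'
      rw [← sum_div, sum_add_distrib, h, h']
      ring

/-- A tuple `(p₁, q₁, p₂, q₂, p₃, q₃, p₄, q₄)` is encoded as `v : Fin 8 → Fin m`, with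
`p_d = v (2(d-1))` and `q_d = v (2(d-1)+1)`. -/
theorem sum_prod_corr_perm_pair_le (π τ : Equiv.Perm (Fin 8)) (k : ℕ)
    (hk : k ∈ ({5, 6, 7, 8} : Finset ℕ)) :
    ∃ C : ℝ, 0 < C ∧ ∀ (m : ℕ) (R : Matrix (Fin m) (Fin m) ℝ), IsCorrMatrix R →
      ∑ v ∈ (Finset.univ : Finset (Fin 8 → Fin m)).filter
          (fun v => (Finset.image v Finset.univ).card = k),
        ∏ d : Fin 4,
          |R (v (π ⟨2 * d.1, by omega⟩)) (v (π ⟨2 * d.1 + 1, by omega⟩))| *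
          |R (v (τ ⟨2 * d.1, by omega⟩)) (v (τ ⟨2 * d.1 + 1, by omega⟩))|
        ≤ C * (m : ℝ) ^ (8 - k) * frobDistId R ^ (2 * (k - 4)) := by
  have hk4 : 4 ≤ k ∧ k ≤ 8 := by simp only [mem_insert, mem_singleton] at hk; omega
  refine ⟨25 * pairConst 4 0, by norm_num [pairConst], fun m R hR => ?_⟩
  set W : Fin m × Fin m → ℝ := fun p => R p.1 p.2 ^ 2
  have hW0 (p : Fin m × Fin m) : 0 ≤ W p := sq_nonneg _
  have hW1 (p : Fin m × Fin m) : W p ≤ 1 := hR.sq_le_one p.1 p.2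
  have he (d : Fin 4) : finProdFinEquiv (d, (0 : Fin 2)) = ⟨2 * d.1, by omega⟩ ∧
      finProdFinEquiv (d, (1 : Fin 2)) = ⟨2 * d.1 + 1, by omega⟩ :=
    ⟨Fin.ext ((finProdFinEquiv_apply_val _).trans (by simp)),
      Fin.ext ((finProdFinEquiv_apply_val _).trans (by simp [add_comm]))⟩
  calc _ ≤ pairSum W ∅ 4 k := by
        simpa only [Equiv.trans_apply, he] using sum_prod_abs_mul_abs_le_pairSum (n := 4) R
          (finProdFinEquiv.trans π) (finProdFinEquiv.trans τ) k
    _ ≤ pairConst 4 0 * walkBound m (offDiagMass W) 4 0 k := by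
        simpa using pairSum_le_walkBound hW0 hW1 4 ∅ k
    _ ≤ pairConst 4 0 * ((4 + 1) ^ 2 * ((m : ℝ) ^ (8 - k) * offDiagMass W ^ (k - 4))) := by
        gcongr
        refine walkBound_le (Nat.cast_nonneg m) (offDiagMass_nonneg hW0) ?_ ?_ ?_
        · simpa only [Fintype.card_fin] using offDiagMass_le hW0 hW1
        all_goals omega
    _ = _ := by rw [← hR.frobDistId_sq, ← pow_mul]; ring
end
end

section
/- Define, for pairs of indices, M(p₁,q₁; p₂,q₂) = ρ_{p₁q₂} ρ_{q₁p₂} + ρ_{p₁p₂} ρ_{q₁q₂}, and for k ∈ {2, 3, 4} let S(k) = Σ over all (p₁,q₁,p₂,q₂) with 1 ≤ p_d < q_d ≤ m (d = 1, 2) and |{p₁,q₁,p₂,q₂}| = k, of M(p₁,q₁; p₂,q₂)². Then there exists a universal constant C > 0 such that for every m and every m×m correlation matrix R: | S(2) − m(m−1)/2 | ≤ C ‖R − I_m‖_F²; S(3) ≤ C ( m ‖R − I_m‖_F² + ‖R − I_m‖_F⁴ ); and S(4) ≤ C ‖R − I_m‖_F⁴. -/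
open Finset

noncomputable section

/-- `M(p₁,q₁; p₂,q₂) = ρ_{p₁q₂} ρ_{q₁p₂} + ρ_{p₁p₂} ρ_{q₁q₂}`, where a pair of
indices is encoded as an element of `Fin m × Fin m`. -/
def Mmom {m : ℕ} (R : Matrix (Fin m) (Fin m) ℝ) (x y : Fin m × Fin m) : ℝ :=
  R x.1 y.2 * R x.2 y.1 + R x.1 y.1 * R x.2 y.2

/-- `S(k)`: the sum of `M(p₁,q₁; p₂,q₂)²` over all `(p₁,q₁,p₂,q₂)` with
`p_d < q_d` (`d = 1, 2`) and `|{p₁,q₁,p₂,q₂}| = k`. -/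
def Ssum {m : ℕ} (R : Matrix (Fin m) (Fin m) ℝ) (k : ℕ) : ℝ :=
  ∑ x ∈ (Finset.univ : Finset ((Fin m × Fin m) × (Fin m × Fin m))).filter
      (fun x => x.1.1 < x.1.2 ∧ x.2.1 < x.2.2 ∧
        ({x.1.1, x.1.2, x.2.1, x.2.2} : Finset (Fin m)).card = k),
    Mmom R x.1 x.2 ^ 2

/-!
Write `R = I + D`, where `D` is the off-diagonal part of `R`, and `F = ‖D‖_F²`. The moment
`M(x; y)` is the sum of two products `R_u R_v`, one for each way of matching the indices of
`x = (p₁, q₁)` with those of `y = (p₂, q₂)`, so `M² ≤ 2 (R_u R_v)² + 2 (R_u' R_v')²`. When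
`|{p₁, q₁, p₂, q₂}| ≥ 3` at most one of `u`, `v` is a diagonal pair, hence
`(R_u R_v)² = [u diagonal] D_v² + [v diagonal] D_u² + D_u² D_v²`; both matchings are
bijections of the index quadruples onto the pairs `(u, v)`, so summing gives
`S(3) ≤ 4 (2 m F + F²)`, and `S(4) ≤ 4 F²` since for four distinct indices only the last
term survives. For `k = 2` the two index pairs coincide and `M = 1 + D_{pq}²`, so
`S(2) - m (m - 1) / 2 = ∑_{p<q} (2 D_{pq}² + D_{pq}⁴)`, which lies in `[0, 3 F]` because the
`2 × 2` principal minors of `R` force `|D_{pq}| ≤ 1`.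
-/

namespace IsCorrMatrix

variable {m : ℕ} {R : Matrix (Fin m) (Fin m) ℝ}

lemma apply_comm (hR : IsCorrMatrix R) (a b : Fin m) : R b a = R a b := by
  simpa using hR.1.1.apply a b

lemma apply_sq_le_one (hR : IsCorrMatrix R) (a b : Fin m) : R a b ^ 2 ≤ 1 := by
  have hdet := (hR.1.submatrix ![a, b]).det_nonneg
  rw [Matrix.det_fin_two] at hdet
  simp [hR.2, hR.apply_comm a b] at hdet
  nlinarith

end IsCorrMatrix

lemma card_filter_fst_lt_snd (m : ℕ) :
    (#{x : Fin m × Fin m | x.1 < x.2} : ℝ) = m * (m - 1) / 2 := by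
  have h_sum : #{x : Fin m × Fin m | x.1 < x.2} = ∑ i ∈ range m, i := by
    rw [card_filter, Fintype.sum_prod_type, sum_comm, ← Fin.sum_univ_eq_sum_range]
    refine sum_congr rfl fun b _ => ?_
    simp [sum_boole, filter_gt_eq_Iio]
  have h_gauss := sum_range_id_mul_two m
  rw [h_sum]
  rcases m with _ | m
  · simp
  · rw [Nat.add_sub_cancel] at h_gauss
    have : ((∑ i ∈ range (m + 1), i : ℕ) : ℝ) * 2 = (m + 1) * m := by exact_mod_cast h_gauss
    push_cast at this ⊢
    linarith

section Pairs

variable {α M : Type*} [Fintype α] [AddCommMonoid M]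

lemma sum_sum_straight (f : α × α → α × α → M) :
    ∑ x : α × α, ∑ y : α × α, f (x.1, y.1) (x.2, y.2) = ∑ u, ∑ v, f u v := by
  simp only [Fintype.sum_prod_type]
  exact sum_congr rfl fun _ _ => sum_comm

lemma sum_sum_cross (f : α × α → α × α → M) :
    ∑ x : α × α, ∑ y : α × α, f (x.1, y.2) (x.2, y.1) = ∑ u, ∑ v, f u v := by
  refine .trans (sum_congr rfl fun x _ => ?_) (sum_sum_straight f)
  exact (Equiv.prodComm α α).sum_comp fun y => f (x.1, y.1) (x.2, y.2)

lemma sum_ite_fst_eq_snd [DecidableEq α] (c : M) :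
    ∑ u : α × α, (if u.1 = u.2 then c else 0) = Fintype.card α • c := by
  simp [Fintype.sum_prod_type]

end Pairs

section Card

variable {α : Type*} [DecidableEq α] {a b c d : α}

lemma pairwise_ne_of_card_eq_four (h : #{a, b, c, d} = 4) :
    a ≠ b ∧ a ≠ c ∧ a ≠ d ∧ b ≠ c ∧ b ≠ d ∧ c ≠ d := by
  refine ⟨?_, ?_, ?_, ?_, ?_, ?_⟩ <;> rintro rfl <;> simp at h <;> linarith [h ▸ card_le_three]

lemma not_and_eq_of_card_eq_three (h : #{a, b, c, d} = 3) :
    ¬(a = d ∧ b = c) ∧ ¬(a = c ∧ b = d) := by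
  refine ⟨?_, ?_⟩ <;> rintro ⟨rfl, rfl⟩ <;> simp at h <;> linarith [h ▸ card_le_two]

lemma eq_of_card_eq_two [LinearOrder α] (hab : a < b) (hcd : c < d) (h : #{a, b, c, d} = 2) :
    c = a ∧ d = b := by
  have h_eq : ({a, b, c, d} : Finset α) = {a, b} :=
    (eq_of_subset_of_card_le (by intro x; simp; tauto) (by rw [h, card_pair hab.ne])).symm
  have hc : c ∈ ({a, b} : Finset α) := h_eq ▸ by simp
  have hd : d ∈ ({a, b} : Finset α) := h_eq ▸ by simp
  simp only [mem_insert, mem_singleton] at hc hd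
  rcases hc with rfl | rfl <;> rcases hd with rfl | rfl
  all_goals first | exact ⟨rfl, rfl⟩ | exact absurd hcd (by order)

end Card

variable {m : ℕ} {R : Matrix (Fin m) (Fin m) ℝ}

def offDiagEntry (R : Matrix (Fin m) (Fin m) ℝ) (u : Fin m × Fin m) : ℝ :=
  if u.1 = u.2 then 0 else R u.1 u.2

lemma frobDistId_sq (hdiag : ∀ p, R p p = 1) :
    frobDistId R ^ 2 = ∑ u, offDiagEntry R u ^ 2 := by
  rw [frobDistId, Real.sq_sqrt (by positivity), Fintype.sum_prod_type]
  refine sum_congr rfl fun a _ => sum_congr rfl fun b _ => ?_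
  rcases eq_or_ne a b with rfl | hab <;> simp [offDiagEntry, *]

lemma offDiagEntry_sq_le_one (hR : IsCorrMatrix R) (u : Fin m × Fin m) :
    offDiagEntry R u ^ 2 ≤ 1 := by
  unfold offDiagEntry
  split_ifs
  · norm_num
  · exact hR.apply_sq_le_one u.1 u.2

def pairProd (R : Matrix (Fin m) (Fin m) ℝ) (u v : Fin m × Fin m) : ℝ :=
  R u.1 u.2 * R v.1 v.2

lemma Mmom_eq_pairProd_add (x y : Fin m × Fin m) :
    Mmom R x y = pairProd R (x.1, y.2) (x.2, y.1) + pairProd R (x.1, y.1) (x.2, y.2) :=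
  rfl

lemma pairProd_eq_offDiagEntry_mul {u v : Fin m × Fin m} (hu : u.1 ≠ u.2) (hv : v.1 ≠ v.2) :
    pairProd R u v = offDiagEntry R u * offDiagEntry R v := by
  simp [pairProd, offDiagEntry, hu, hv]

def pairBound (R : Matrix (Fin m) (Fin m) ℝ) (u v : Fin m × Fin m) : ℝ :=
  (if u.1 = u.2 then offDiagEntry R v ^ 2 else 0)
    + (if v.1 = v.2 then offDiagEntry R u ^ 2 else 0) + offDiagEntry R u ^ 2 * offDiagEntry R v ^ 2

lemma pairProd_sq_le_pairBound (hdiag : ∀ p, R p p = 1) {u v : Fin m × Fin m}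
    (h : ¬(u.1 = u.2 ∧ v.1 = v.2)) : pairProd R u v ^ 2 ≤ pairBound R u v := by
  by_cases hu : u.1 = u.2 <;> by_cases hv : v.1 = v.2
  · exact absurd ⟨hu, hv⟩ h
  all_goals simp [pairProd, pairBound, offDiagEntry, hu, hv, hdiag, mul_pow]

lemma sum_sum_pairBound :
    ∑ u, ∑ v, pairBound R u v
      = 2 * m * ∑ u, offDiagEntry R u ^ 2 + (∑ u, offDiagEntry R u ^ 2) ^ 2 := by
  simp only [pairBound, sum_add_distrib, sum_ite_irrel, sum_const_zero, sum_ite_fst_eq_snd,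
    Fintype.card_fin, nsmul_eq_mul, ← mul_sum]
  rw [← sum_mul]
  ring

lemma Ssum_le_four_mul_sum (k : ℕ) (f : Fin m × Fin m → Fin m × Fin m → ℝ)
    (hf_nonneg : ∀ u v, 0 ≤ f u v)
    (hf : ∀ x y : Fin m × Fin m, x.1 < x.2 → y.1 < y.2 → #{x.1, x.2, y.1, y.2} = k →
      pairProd R (x.1, y.2) (x.2, y.1) ^ 2 ≤ f (x.1, y.2) (x.2, y.1) ∧
        pairProd R (x.1, y.1) (x.2, y.2) ^ 2 ≤ f (x.1, y.1) (x.2, y.2)) :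
    Ssum R k ≤ 4 * ∑ u, ∑ v, f u v := by
  set g : (Fin m × Fin m) × (Fin m × Fin m) → ℝ :=
    fun z => 2 * f (z.1.1, z.2.2) (z.1.2, z.2.1) + 2 * f (z.1.1, z.2.1) (z.1.2, z.2.2)
  calc Ssum R k ≤ ∑ z ∈ univ.filter (fun z : (Fin m × Fin m) × (Fin m × Fin m) =>
          z.1.1 < z.1.2 ∧ z.2.1 < z.2.2 ∧ #{z.1.1, z.1.2, z.2.1, z.2.2} = k), g z := by
        refine sum_le_sum fun z hz => ?_
        simp only [mem_filter, mem_univ, true_and] at hz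
        obtain ⟨h_cross, h_straight⟩ := hf z.1 z.2 hz.1 hz.2.1 hz.2.2
        rw [Mmom_eq_pairProd_add]
        linarith [add_sq_le (a := pairProd R (z.1.1, z.2.2) (z.1.2, z.2.1))
          (b := pairProd R (z.1.1, z.2.1) (z.1.2, z.2.2))]
    _ ≤ ∑ z, g z := sum_le_sum_of_subset_of_nonneg (filter_subset _ _) fun z _ _ => by
        have := hf_nonneg (z.1.1, z.2.2) (z.1.2, z.2.1)
        have := hf_nonneg (z.1.1, z.2.1) (z.1.2, z.2.2)
        positivity
    _ = 4 * ∑ u, ∑ v, f u v := by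
        rw [Fintype.sum_prod_type]
        simp only [g, sum_add_distrib, ← mul_sum, sum_sum_cross, sum_sum_straight]
        ring

lemma Mmom_self (hR : IsCorrMatrix R) (x : Fin m × Fin m) (hx : x.1 ≠ x.2) :
    Mmom R x x = 1 + offDiagEntry R x ^ 2 := by
  simp [Mmom, offDiagEntry, hx, hR.2, hR.apply_comm x.1 x.2]
  ring

lemma Ssum_two_eq (hR : IsCorrMatrix R) :
    Ssum R 2 = ∑ x ∈ {x : Fin m × Fin m | x.1 < x.2}, (1 + offDiagEntry R x ^ 2) ^ 2 := by
  rw [Ssum, sum_filter, Fintype.sum_prod_type, sum_filter]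
  refine sum_congr rfl fun x _ => ?_
  rw [Fintype.sum_eq_single x]
  · by_cases hx : x.1 < x.2
    · simp [hx, card_pair hx.ne, Mmom_self hR x hx.ne]
    · simp [hx]
  · refine fun y hy => if_neg fun ⟨hx, hy', hk⟩ => hy ?_
    obtain ⟨h1, h2⟩ := eq_of_card_eq_two hx hy' hk
    exact Prod.ext h1 h2

lemma Ssum_two_sub_bounds (hR : IsCorrMatrix R) :
    0 ≤ Ssum R 2 - m * (m - 1) / 2 ∧ Ssum R 2 - m * (m - 1) / 2 ≤ 3 * frobDistId R ^ 2 := by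
  have h_eq : Ssum R 2 - m * (m - 1) / 2 =
      ∑ x ∈ {x : Fin m × Fin m | x.1 < x.2}, (2 * offDiagEntry R x ^ 2 + offDiagEntry R x ^ 4) := by
    rw [Ssum_two_eq hR, ← card_filter_fst_lt_snd, card_eq_sum_ones, Nat.cast_sum, Nat.cast_one,
      ← sum_sub_distrib]
    exact sum_congr rfl fun x _ => by ring
  rw [h_eq, frobDistId_sq hR.2]
  refine ⟨sum_nonneg fun x _ => by positivity, ?_⟩
  calc _ ≤ ∑ x ∈ {x : Fin m × Fin m | x.1 < x.2}, 3 * offDiagEntry R x ^ 2 :=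
        sum_le_sum fun x _ => by
          nlinarith [offDiagEntry_sq_le_one hR x, sq_nonneg (offDiagEntry R x)]
    _ ≤ ∑ x, 3 * offDiagEntry R x ^ 2 :=
        sum_le_sum_of_subset_of_nonneg (filter_subset _ _) fun x _ _ => by positivity
    _ = 3 * ∑ x, offDiagEntry R x ^ 2 := (mul_sum _ _ _).symm

lemma Ssum_three_le (hdiag : ∀ p, R p p = 1) :
    Ssum R 3 ≤ 4 * (2 * m * frobDistId R ^ 2 + frobDistId R ^ 4) := by
  have h := Ssum_le_four_mul_sum 3 (pairBound R) (fun u v => by unfold pairBound; positivity)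
    fun x y _ _ hk => by
      obtain ⟨h_cross, h_straight⟩ := not_and_eq_of_card_eq_three hk
      exact ⟨pairProd_sq_le_pairBound hdiag h_cross, pairProd_sq_le_pairBound hdiag h_straight⟩
  rwa [sum_sum_pairBound, ← frobDistId_sq hdiag, ← pow_mul] at h

lemma Ssum_four_le (hdiag : ∀ p, R p p = 1) : Ssum R 4 ≤ 4 * frobDistId R ^ 4 := by
  have h := Ssum_le_four_mul_sum (R := R) 4
    (fun u v => offDiagEntry R u ^ 2 * offDiagEntry R v ^ 2) (fun u v => by positivity)
    fun x y _ _ hk => by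
      obtain ⟨-, h13, h14, h23, h24, -⟩ := pairwise_ne_of_card_eq_four hk
      rw [pairProd_eq_offDiagEntry_mul (u := (x.1, y.2)) (v := (x.2, y.1)) h14 h23,
        pairProd_eq_offDiagEntry_mul (u := (x.1, y.1)) (v := (x.2, y.2)) h13 h24, mul_pow, mul_pow]
      exact ⟨le_rfl, le_rfl⟩
  rwa [← sum_mul_sum, ← sq, ← frobDistId_sq hdiag, ← pow_mul] at h

/-- Estimates for `S(2)`, `S(3)`, `S(4)` with a universal constant. -/
theorem Ssum_estimates :
    ∃ C : ℝ, 0 < C ∧ ∀ (m : ℕ) (R : Matrix (Fin m) (Fin m) ℝ), IsCorrMatrix R →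
      |Ssum R 2 - (m : ℝ) * ((m : ℝ) - 1) / 2| ≤ C * frobDistId R ^ 2 ∧
      Ssum R 3 ≤ C * ((m : ℝ) * frobDistId R ^ 2 + frobDistId R ^ 4) ∧
      Ssum R 4 ≤ C * frobDistId R ^ 4 := by
  refine ⟨8, by norm_num, fun m R hR => ?_⟩
  have h_pow_nonneg : 0 ≤ frobDistId R ^ 4 := by positivity
  obtain ⟨h_lower, h_upper⟩ := Ssum_two_sub_bounds hR
  refine ⟨?_, ?_, ?_⟩
  · rw [abs_of_nonneg h_lower]
    linarith [sq_nonneg (frobDistId R)]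
  · linarith [Ssum_three_le hR.2]
  · linarith [Ssum_four_le hR.2]
end
end
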